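/- Let n ≥ 3 and let f = (f_0, …, f_n) be given by f_k = a_0^{n−k} b_0^k + a_1^{n−k} b_1^k, where v_0 = (a_0, b_0) and v_1 = (a_1, b_1) are linearly independent vectors in ℂ². If f ∈ 𝒜₂, then (a_0 a_1 + b_0 b_1)² = −(a_1 b_0 − a_0 b_1)² (i.e., θ(v_0, v_1) = −1). -/

import Mathlib

/-- `f ∈ 𝒜₂`: there exist `H ∈ O₂(ℂ)` and a nonzero `c ∈ ℂ` such that
`f = c ((H(1,i))^{⊗n} + (H(1,-i))^{⊗n})`. -/
def MemA2 (n : ℕ) (f : ℕ → ℂ) : Prop :=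
  ∃ (H : Matrix (Fin 2) (Fin 2) ℂ) (c : ℂ),
    H.transpose * H = 1 ∧ c ≠ 0 ∧
    ∀ k ≤ n, f k =
      c * (H.mulVec ![1, Complex.I] 0 ^ (n - k) * H.mulVec ![1, Complex.I] 1 ^ k +
        H.mulVec ![1, -Complex.I] 0 ^ (n - k) * H.mulVec ![1, -Complex.I] 1 ^ k)

/-!
Write `w₀ = H(1,i)` and `w₁ = H(1,-i)`. The second-order recurrence with characteristic
polynomial `(w₀.2 x - w₀.1 y)(w₁.2 x - w₁.1 y)` annihilates `w₀^{⊗n}` and `w₁^{⊗n}`; applied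
to `f = v₀^{⊗n} + v₁^{⊗n}` it leaves `e₀ v₀^{⊗(n-2)} + e₁ v₁^{⊗(n-2)} = 0` with
`eᵢ = det₂ vᵢ w₀ · det₂ vᵢ w₁`. Since `n - 2 ≥ 1` and `v₀, v₁` are independent, `e₀ = 0`, so
`v₀` is parallel to `w₀` or `w₁`. Both are isotropic for `x² + y²`, being orthogonal images of
`(1, ±i)`, hence so is `v₀`, and Lagrange's identity
`(a₀a₁ + b₀b₁)² + (a₁b₀ - a₀b₁)² = (a₀² + b₀²)(a₁² + b₁²)` gives the claim.
-/

section SymPow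

variable {R : Type*} [CommRing R]

def symPow (n : ℕ) (v : R × R) (k : ℕ) : R := v.1 ^ (n - k) * v.2 ^ k

def det₂ (v w : R × R) : R := v.1 * w.2 - v.2 * w.1

@[simp]
lemma det₂_self (v : R × R) : det₂ v v = 0 := by
  unfold det₂; ring

lemma symPow_shift (v w : R × R) {n k : ℕ} (hk : k < n) :
    w.2 * symPow n v k - w.1 * symPow n v (k + 1) = det₂ v w * symPow (n - 1) v k := by
  obtain ⟨m, rfl⟩ := Nat.exists_eq_add_of_lt hk
  simp only [symPow, det₂, show k + m + 1 - k = m + 1 by omega,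
    show k + m + 1 - (k + 1) = m by omega, show k + m + 1 - 1 - k = m by omega]
  ring

lemma symPow_shift_shift (v w₀ w₁ : R × R) {n k : ℕ} (hk : k + 2 ≤ n) :
    w₀.2 * w₁.2 * symPow n v k - (w₀.1 * w₁.2 + w₁.1 * w₀.2) * symPow n v (k + 1) +
        w₀.1 * w₁.1 * symPow n v (k + 2) =
      det₂ v w₀ * det₂ v w₁ * symPow (n - 2) v k := by
  have h₀ := symPow_shift v w₀ (n := n) (k := k) (by omega)
  have h₀' := symPow_shift v w₀ (n := n) (k := k + 1) (by omega)
  have h₁ := symPow_shift v w₁ (n := n - 1) (k := k) (by omega)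
  rw [show n - 1 - 1 = n - 2 by omega] at h₁
  linear_combination w₁.2 * h₀ - w₁.1 * h₀' + det₂ v w₀ * h₁

lemma det₂_mul_det₂_mul_symPow_add_eq_zero {n k : ℕ} {v₀ v₁ w₀ w₁ : R × R} {c : R}
    (h : ∀ j ≤ n, symPow n v₀ j + symPow n v₁ j = c * (symPow n w₀ j + symPow n w₁ j))
    (hk : k + 2 ≤ n) :
    det₂ v₀ w₀ * det₂ v₀ w₁ * symPow (n - 2) v₀ k +
      det₂ v₁ w₀ * det₂ v₁ w₁ * symPow (n - 2) v₁ k = 0 := by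
  have hv₀ := symPow_shift_shift v₀ w₀ w₁ hk
  have hv₁ := symPow_shift_shift v₁ w₀ w₁ hk
  have hw₀ := symPow_shift_shift w₀ w₀ w₁ hk
  have hw₁ := symPow_shift_shift w₁ w₀ w₁ hk
  simp only [det₂_self, zero_mul, mul_zero] at hw₀ hw₁
  linear_combination -hv₀ - hv₁ + c * (hw₀ + hw₁) + w₀.2 * w₁.2 * h k (by omega) -
    (w₀.1 * w₁.2 + w₁.1 * w₀.2) * h (k + 1) (by omega) + w₀.1 * w₁.1 * h (k + 2) hk

lemma det₂_ne_zero_of_linearIndependent [Nontrivial R] {v₀ v₁ : R × R}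
    (h : LinearIndependent R ![v₀, v₁]) : det₂ v₀ v₁ ≠ 0 := by
  intro hd
  unfold det₂ at hd
  have h' : ∀ s t : R, s * v₀.1 + t * v₁.1 = 0 → s * v₀.2 + t * v₁.2 = 0 → s = 0 ∧ t = 0 :=
    fun s t h₁ h₂ ↦ LinearIndependent.pair_iff.mp h s t (Prod.ext h₁ h₂)
  obtain ⟨-, hb₀⟩ := h' v₁.2 (-v₀.2) (by linear_combination hd) (by ring)
  obtain ⟨-, ha₀⟩ := h' v₁.1 (-v₀.1) (by ring) (by linear_combination -hd)
  rw [neg_eq_zero] at ha₀ hb₀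
  exact one_ne_zero (h' 1 0 (by simp [ha₀]) (by simp [hb₀])).1

lemma eq_zero_of_forall_mul_symPow_add_mul_symPow_eq_zero [IsDomain R] {m : ℕ} (hm : 1 ≤ m)
    {v₀ v₁ : R × R} (hd : det₂ v₀ v₁ ≠ 0) {e₀ e₁ : R}
    (h : ∀ k ≤ m, e₀ * symPow m v₀ k + e₁ * symPow m v₁ k = 0) : e₀ = 0 := by
  have h' : ∀ k < m, e₀ * det₂ v₀ v₁ * symPow (m - 1) v₀ k = 0 := by
    intro k hk
    have h₀ := symPow_shift v₀ v₁ hk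
    have h₁ := symPow_shift v₁ v₁ hk
    rw [det₂_self, zero_mul] at h₁
    linear_combination v₁.2 * h k hk.le - v₁.1 * h (k + 1) hk - e₀ * h₀ - e₁ * h₁
  by_cases ha : v₀.1 = 0
  · have hb : v₀.2 ≠ 0 := fun hb ↦ hd (by simp [det₂, ha, hb])
    simpa [symPow, hd, hb] using h' (m - 1) (by omega)
  · simpa [symPow, hd, ha] using h' 0 (by omega)

lemma sq_add_sq_eq_zero_of_det₂_eq_zero [IsDomain R] {v w : R × R} (hw : w.1 ^ 2 + w.2 ^ 2 = 0)
    (hw₀ : w ≠ 0) (hd : det₂ v w = 0) : v.1 ^ 2 + v.2 ^ 2 = 0 := by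
  by_cases h₁ : w.1 = 0
  · have h₂ : w.2 = 0 := by simpa [h₁] using hw
    exact absurd (Prod.ext h₁ h₂) hw₀
  · apply mul_left_cancel₀ (pow_ne_zero 2 h₁)
    unfold det₂ at hd
    linear_combination v.1 ^ 2 * hw - (v.2 * w.1 + v.1 * w.2) * hd

end SymPow

section Orthogonal

open Matrix

variable {ι R : Type*} [Fintype ι] [DecidableEq ι] [CommRing R] {H : Matrix ι ι R}

lemma dotProduct_mulVec_self_of_transpose_mul_self (hH : Hᵀ * H = 1) (u : ι → R) :
    H *ᵥ u ⬝ᵥ H *ᵥ u = u ⬝ᵥ u := by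
  rw [dotProduct_mulVec, ← vecMul_transpose, vecMul_vecMul, hH, vecMul_one]

lemma mulVec_ne_zero_of_transpose_mul_self (hH : Hᵀ * H = 1) {u : ι → R} (hu : u ≠ 0) :
    H *ᵥ u ≠ 0 := fun h ↦ hu <| by
  rw [← one_mulVec u, ← hH, ← mulVec_mulVec, h, mulVec_zero]

end Orthogonal

section Isotropic

open Matrix

variable {R : Type*} [CommRing R] {H : Matrix (Fin 2) (Fin 2) R}

lemma sq_add_sq_mulVec_eq_zero (hH : Hᵀ * H = 1) {z : R} (hz : z ^ 2 = -1) :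
    (H *ᵥ ![1, z]) 0 ^ 2 + (H *ᵥ ![1, z]) 1 ^ 2 = 0 := by
  have h := dotProduct_mulVec_self_of_transpose_mul_self hH ![1, z]
  simp only [dotProduct, Fin.sum_univ_two, cons_val_zero, cons_val_one] at h
  linear_combination h + hz

lemma prod_mulVec_ne_zero [Nontrivial R] (hH : Hᵀ * H = 1) (z : R) :
    ((H *ᵥ ![1, z]) 0, (H *ᵥ ![1, z]) 1) ≠ 0 := by
  have h := mulVec_ne_zero_of_transpose_mul_self hH (u := ![1, z]) fun h ↦ by
    simpa using congrFun h 0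
  contrapose! h
  ext i
  fin_cases i
  exacts [congrArg Prod.fst h, congrArg Prod.snd h]

end Isotropic

/-- If `f = v₀^{⊗n} + v₁^{⊗n}` with `v₀ = (a₀, b₀)`, `v₁ = (a₁, b₁)` linearly independent,
`n ≥ 3`, and `f ∈ 𝒜₂`, then `(a₀ a₁ + b₀ b₁)² = −(a₁ b₀ − a₀ b₁)²`, i.e.
`θ(v₀, v₁) = −1`. -/
theorem stmt_8 (n : ℕ) (hn : 3 ≤ n) (a₀ b₀ a₁ b₁ : ℂ)
    (hli : LinearIndependent ℂ ![(a₀, b₀), (a₁, b₁)]) (f : ℕ → ℂ)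
    (hf : ∀ k ≤ n, f k = a₀ ^ (n - k) * b₀ ^ k + a₁ ^ (n - k) * b₁ ^ k)
    (hmem : MemA2 n f) :
    (a₀ * a₁ + b₀ * b₁) ^ 2 = -(a₁ * b₀ - a₀ * b₁) ^ 2 := by
  obtain ⟨H, c, hH, -, hw⟩ := hmem
  let w : ℂ → ℂ × ℂ := fun z ↦ (H.mulVec ![1, z] 0, H.mulVec ![1, z] 1)
  have hsum : ∀ k ≤ n, symPow n (a₀, b₀) k + symPow n (a₁, b₁) k =
      c * (symPow n (w Complex.I) k + symPow n (w (-Complex.I)) k) :=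
    fun k hk ↦ (hf k hk).symm.trans (hw k hk)
  have he : det₂ (a₀, b₀) (w Complex.I) * det₂ (a₀, b₀) (w (-Complex.I)) = 0 :=
    eq_zero_of_forall_mul_symPow_add_mul_symPow_eq_zero (m := n - 2) (by omega)
      (det₂_ne_zero_of_linearIndependent hli)
      fun k hk ↦ det₂_mul_det₂_mul_symPow_add_eq_zero hsum (by omega)
  obtain ⟨z, hz, hd⟩ : ∃ z : ℂ, z ^ 2 = -1 ∧ det₂ (a₀, b₀) (w z) = 0 :=
    (mul_eq_zero.mp he).elim (⟨_, Complex.I_sq, ·⟩) (⟨_, by simp, ·⟩)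
  have hv₀ : a₀ ^ 2 + b₀ ^ 2 = 0 :=
    sq_add_sq_eq_zero_of_det₂_eq_zero (w := w z) (sq_add_sq_mulVec_eq_zero hH hz)
      (prod_mulVec_ne_zero hH z) hd
  linear_combination (a₁ ^ 2 + b₁ ^ 2) * hv₀
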